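/- arXiv:1810.03491 — 6 statements merged into one kernel-verified Lean document; each statement's English description precedes it below -/
import Mathlib

section
/- Let G = (V, E) be a directed graph on a finite vertex set and S ⊆ V. For every cross edge (u, v) ∈ E (i.e., part(u) ≠ part(v)), we have part(u) ≺* part(v): either |A_S(u)| < |A_S(v)|, or |A_S(u)| = |A_S(v)| and |D_S(u)| > |D_S(v)|. -/
open Relation

section

variable {V : Type*} [Finite V] {E : V → V → Prop} (S : Set V) {u v : V}

theorem ncard_ancestors_inter_le_of_reflTransGen (h : ReflTransGen E u v) :
    ({x | ReflTransGen E x u} ∩ S).ncard ≤ ({x | ReflTransGen E x v} ∩ S).ncard :=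
  Set.ncard_le_ncard (Set.inter_subset_inter_left S fun _ hx => hx.trans h)

theorem ncard_descendants_inter_le_of_reflTransGen (h : ReflTransGen E u v) :
    ({y | ReflTransGen E v y} ∩ S).ncard ≤ ({y | ReflTransGen E u y} ∩ S).ncard :=
  Set.ncard_le_ncard (Set.inter_subset_inter_left S fun _ hy => h.trans hy)

end

theorem lt_or_eq_and_lt_of_le_of_le_of_ne {α β : Type*} [PartialOrder α] [PartialOrder β]
    {a a' : α} {b b' : β} (ha : a ≤ a') (hb : b' ≤ b) (hne : (a, b) ≠ (a', b')) :
    a < a' ∨ (a = a' ∧ b' < b) := by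
  rcases ha.lt_or_eq with ha | rfl
  · exact Or.inl ha
  · exact Or.inr ⟨rfl, hb.lt_of_ne fun hb => hne (by rw [hb])⟩

/-- For every cross edge `(u, v)` (i.e. `part(u) ≠ part(v)`), we have
`part(u) ≺* part(v)`: either `|A_S(u)| < |A_S(v)|`, or `|A_S(u)| = |A_S(v)|` and
`|D_S(u)| > |D_S(v)|`. -/
theorem cross_edge_part_lt
    {V : Type*} [Fintype V] (E : V → V → Prop) (S : Set V) (u v : V)
    (hedge : E u v)
    (hcross :
      (({x | Relation.ReflTransGen E x u} ∩ S).ncard,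
        ({y | Relation.ReflTransGen E u y} ∩ S).ncard) ≠
      (({x | Relation.ReflTransGen E x v} ∩ S).ncard,
        ({y | Relation.ReflTransGen E v y} ∩ S).ncard)) :
    ({x | Relation.ReflTransGen E x u} ∩ S).ncard <
      ({x | Relation.ReflTransGen E x v} ∩ S).ncard ∨
    (({x | Relation.ReflTransGen E x u} ∩ S).ncard =
        ({x | Relation.ReflTransGen E x v} ∩ S).ncard ∧
      ({y | Relation.ReflTransGen E v y} ∩ S).ncard <
        ({y | Relation.ReflTransGen E u y} ∩ S).ncard) :=
  lt_or_eq_and_lt_of_le_of_le_of_ne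
    (ncard_ancestors_inter_le_of_reflTransGen S (.single hedge))
    (ncard_descendants_inter_le_of_reflTransGen S (.single hedge)) hcross
end

section
/- Let G = (V, E) be a directed graph on a finite vertex set with |V| = n ≥ 2, let τ ≥ 1 be an integer with (ln n)/τ ≤ 1, and let u, v ∈ V be such that there is a directed path from u to v but the ordered pair (u, v) is NOT τ-related (i.e., |A(v) \ A(u)| > τ or |D(u) \ D(v)| > τ). Let S be a random subset of V in which each node is included independently with probability (ln n)/τ. Then the probability that |A_S(u)| = |A_S(v)| and |D_S(u)| = |D_S(v)| (i.e., that u and v fall in the same part V_{i,j}) is at most 1/n. -/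
open MeasureTheory
open scoped ENNReal NNReal

/-!
If `u` reaches `v`, then `A(u) ⊆ A(v)` and `D(v) ⊆ D(u)`, so `|A_S(u)| = |A_S(v)|` forces `S` to
miss `A(v) \ A(u)`, and `|D_S(u)| = |D_S(v)|` forces it to miss `D(u) \ D(v)`. When `(u, v)` is not
`τ`-related one of these sets has more than `τ` elements, and `S` misses it with probability at
most `(1 - p)^τ ≤ exp (-p τ) = 1/n` for `p = (ln n)/τ`.
-/

theorem Set.disjoint_diff_of_ncard_inter_eq {α : Type*} {s t S : Set α} (hst : s ⊆ t)
    (ht : t.Finite) (h : (s ∩ S).ncard = (t ∩ S).ncard) : Disjoint (t \ s) S := by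
  have hinter : s ∩ S = t ∩ S :=
    Set.eq_of_subset_of_ncard_le (Set.inter_subset_inter_left S hst) h.ge (ht.inter_of_left S)
  rw [Set.disjoint_left]
  rintro x ⟨hxt, hxs⟩ hxS
  exact hxs (hinter ▸ ⟨hxt, hxS⟩ : x ∈ s ∩ S).1

theorem measure_pi_bernoulli_disjoint_eq {ι : Type*} [Fintype ι] (p : ℝ≥0) (hp : p ≤ 1)
    (W : Set ι) :
    Measure.pi (fun _ : ι => (PMF.bernoulli p hp).toMeasure) {ω | Disjoint W {i | ω i = true}} =
      (1 - (p : ℝ≥0∞)) ^ W.ncard := by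
  classical
  have hcyl : {ω : ι → Bool | Disjoint W {i | ω i = true}} =
      (W.toFinset : Set ι).pi fun _ => {false} := by
    ext ω
    simp [Set.disjoint_left]
  rw [hcyl, Measure.pi_pi_finset, Finset.prod_const, Set.ncard_eq_toFinset_card',
    PMF.toMeasure_apply_singleton _ _ (measurableSet_singleton _), PMF.bernoulli_apply]
  rfl

theorem one_sub_log_div_pow_le_inv {n τ : ℕ} (hn : 0 < n) (hτ : 0 < τ)
    (hp : Real.log n / τ ≤ 1) :
    (1 - ((Real.log n / τ).toNNReal : ℝ≥0∞)) ^ τ ≤ 1 / n := by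
  have hn' : (0 : ℝ) < n := by exact_mod_cast hn
  have hlog : Real.log n ≤ τ := (div_le_one (by exact_mod_cast hτ)).mp hp
  have hreal : (1 - Real.log n / τ) ^ τ ≤ 1 / n := by
    calc (1 - Real.log n / τ) ^ τ ≤ Real.exp (-Real.log n) :=
          Real.one_sub_div_pow_le_exp_neg hlog
      _ = 1 / n := by rw [Real.exp_neg, Real.exp_log hn', one_div]
  have hp0 : 0 ≤ Real.log n / τ := div_nonneg (Real.log_natCast_nonneg n) τ.cast_nonneg
  calc (1 - ((Real.log n / τ).toNNReal : ℝ≥0∞)) ^ τ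
      = ENNReal.ofReal ((1 - Real.log n / τ) ^ τ) := by
        rw [ENNReal.ofReal_pow (by linarith), ENNReal.ofReal_sub _ hp0, ENNReal.ofReal_one]
        rfl
    _ ≤ ENNReal.ofReal (1 / n) := ENNReal.ofReal_le_ofReal hreal
    _ = 1 / n := by rw [one_div, ENNReal.ofReal_inv_of_pos hn', ENNReal.ofReal_natCast, one_div]

theorem prob_same_part_of_not_related_le_general
    {V : Type} [Fintype V] (E : V → V → Prop) (n τ : ℕ) (hn : Fintype.card V = n)
    (hτ : 1 ≤ τ) (hp : Real.log n / τ ≤ 1) (u v : V)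
    (hpath : Relation.ReflTransGen E u v)
    (hnotrel :
      τ < ({x | Relation.ReflTransGen E x v} \ {x | Relation.ReflTransGen E x u}).ncard ∨
      τ < ({y | Relation.ReflTransGen E u y} \ {y | Relation.ReflTransGen E v y}).ncard) :
    (Measure.pi fun _ : V =>
        (PMF.bernoulli (Real.toNNReal (Real.log n / τ))
          (Real.toNNReal_le_one.mpr hp)).toMeasure)
      {ω : V → Bool |
        ({x | Relation.ReflTransGen E x u} ∩ {x | ω x = true}).ncard =
          ({x | Relation.ReflTransGen E x v} ∩ {x | ω x = true}).ncard ∧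
        ({y | Relation.ReflTransGen E u y} ∩ {x | ω x = true}).ncard =
          ({y | Relation.ReflTransGen E v y} ∩ {x | ω x = true}).ncard} ≤ 1 / n := by
  have hn0 : 0 < n := hn ▸ Fintype.card_pos_iff.mpr ⟨u⟩
  obtain ⟨W, hW, hmissed⟩ : ∃ W : Set V, τ < W.ncard ∧
      {ω : V → Bool |
        ({x | Relation.ReflTransGen E x u} ∩ {x | ω x = true}).ncard =
          ({x | Relation.ReflTransGen E x v} ∩ {x | ω x = true}).ncard ∧
        ({y | Relation.ReflTransGen E u y} ∩ {x | ω x = true}).ncard =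
          ({y | Relation.ReflTransGen E v y} ∩ {x | ω x = true}).ncard}
        ⊆ {ω | Disjoint W {x | ω x = true}} := by
    rcases hnotrel with h | h
    · exact ⟨_, h, fun ω hω => Set.disjoint_diff_of_ncard_inter_eq
        (fun _ hx => hx.trans hpath) (Set.toFinite _) hω.1⟩
    · exact ⟨_, h, fun ω hω => Set.disjoint_diff_of_ncard_inter_eq
        (fun _ hy => hpath.trans hy) (Set.toFinite _) hω.2.symm⟩
  calc _ ≤ _ := measure_mono hmissed
    _ = _ := measure_pi_bernoulli_disjoint_eq _ _ W
    _ ≤ (1 - ((Real.log n / τ).toNNReal : ℝ≥0∞)) ^ τ :=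
        pow_le_pow_right_of_le_one' tsub_le_self hW.le
    _ ≤ 1 / n := one_sub_log_div_pow_le_inv hn0 hτ hp

/-- Let `|V| = n ≥ 2`, `τ ≥ 1` with `(ln n)/τ ≤ 1`, and suppose there is a
directed path from `u` to `v` but the ordered pair `(u, v)` is NOT τ-related, i.e.
`|A(v) \ A(u)| > τ` or `|D(u) \ D(v)| > τ`. If `S` is a random subset of `V` including
each node independently with probability `(ln n)/τ`, then the probability that
`|A_S(u)| = |A_S(v)|` and `|D_S(u)| = |D_S(v)|` (i.e. that `u` and `v` fall in the same
part `V_{i,j}`) is at most `1/n`. -/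
theorem prob_same_part_of_not_related_le
    {V : Type} [Fintype V] (E : V → V → Prop) (n τ : ℕ) (hn : Fintype.card V = n)
    (h2 : 2 ≤ n) (hτ : 1 ≤ τ) (hp : Real.log n / τ ≤ 1) (u v : V)
    (hpath : Relation.ReflTransGen E u v)
    (hnotrel :
      τ < ({x | Relation.ReflTransGen E x v} \ {x | Relation.ReflTransGen E x u}).ncard ∨
      τ < ({y | Relation.ReflTransGen E u y} \ {y | Relation.ReflTransGen E v y}).ncard) :
    (Measure.pi fun _ : V =>
        (PMF.bernoulli (Real.toNNReal (Real.log n / τ))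
          (Real.toNNReal_le_one.mpr hp)).toMeasure)
      {ω : V → Bool |
        ({x | Relation.ReflTransGen E x u} ∩ {x | ω x = true}).ncard =
          ({x | Relation.ReflTransGen E x v} ∩ {x | ω x = true}).ncard ∧
        ({y | Relation.ReflTransGen E u y} ∩ {x | ω x = true}).ncard =
          ({y | Relation.ReflTransGen E v y} ∩ {x | ω x = true}).ncard} ≤ 1 / n :=
  prob_same_part_of_not_related_le_general E n τ hn hτ hp u v hpath hnotrel
end

section
/- Let G = (V, E) be a directed graph on a finite vertex set, k : V → ℕ an injective function, and u, v ∈ V. Let F_a, F_d, B_d ⊆ V be pairwise disjoint sets satisfying: (i) for every edge (x, y) ∈ E with x ∈ F_d, y ∈ F_a ∪ F_d; (ii) every node of B_d has a directed path to u; (iii) for all nodes x, y each having a directed path to u, if x ∈ B_d and k(x) < k(y) then y ∈ B_d; (iv) v ∈ F_a ∪ F_d and u ∉ F_a ∪ F_d; (v) B_d ≠ ∅ and every x ∈ F_a satisfies k(x) > min{k(y) : y ∈ B_d}. Then there is no directed path from v to u in G. -/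
/-!
Every node of `F_a` that reaches `u` has a larger key than the minimiser of `k` on `B_d`, which
also reaches `u`; by (iii) it lies in `B_d`, which is impossible. So no node of `F_a` reaches `u`.
A path from `v` to `u` starts in `F_a ∪ F_d` and ends outside it; by (i) it can leave `F_d` only
into `F_a`, so it visits `F_a` and from there reaches `u`.
-/

open Relation

theorem Relation.ReflTransGen.exists_mem_left_of_forall_succ_mem_union {α : Type*}
    {r : α → α → Prop} {A B : Set α} {x z : α} (hB : ∀ x y, r x y → x ∈ B → y ∈ A ∪ B)
    (h : ReflTransGen r x z) (hx : x ∈ A ∪ B) (hz : z ∉ A ∪ B) :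
    ∃ a ∈ A, ReflTransGen r a z := by
  induction h using ReflTransGen.head_induction_on with
  | refl => exact absurd hx hz
  | @head x y hxy hyz ih =>
    rcases hx with hxA | hxB
    · exact ⟨x, hxA, .head hxy hyz⟩
    · exact ih (hB x y hxy hxB)

theorem mem_of_sInf_image_lt_of_reflTransGen {V : Type*} {E : V → V → Prop} {k : V → ℕ}
    {u x : V} {Bd : Set V} (hii : ∀ y ∈ Bd, ReflTransGen E y u)
    (hiii : ∀ x y, ReflTransGen E x u → ReflTransGen E y u → x ∈ Bd → k x < k y → y ∈ Bd)
    (hBd : Bd.Nonempty) (hxu : ReflTransGen E x u) (hx : sInf (k '' Bd) < k x) : x ∈ Bd := by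
  obtain ⟨m, hm, hmk⟩ := Nat.sInf_mem (hBd.image k)
  exact hiii m x (hii m hm) hxu hm (hmk ▸ hx)

theorem no_path_of_min_backward_dead_lt_forward_alive_general
    {V : Type*} (E : V → V → Prop) (k : V → ℕ)
    (u v : V) (Fa Fd Bd : Set V)
    (hd2 : Disjoint Fa Bd)
    (hi : ∀ x y, E x y → x ∈ Fd → y ∈ Fa ∪ Fd)
    (hii : ∀ y ∈ Bd, Relation.ReflTransGen E y u)
    (hiii : ∀ x y, Relation.ReflTransGen E x u → Relation.ReflTransGen E y u →
      x ∈ Bd → k x < k y → y ∈ Bd)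
    (hv : v ∈ Fa ∪ Fd) (hu : u ∉ Fa ∪ Fd)
    (hBd : Bd.Nonempty)
    (hmin : ∀ x ∈ Fa, sInf (k '' Bd) < k x) :
    ¬ Relation.ReflTransGen E v u := by
  intro hvu
  obtain ⟨a, haFa, hau⟩ := hvu.exists_mem_left_of_forall_succ_mem_union hi hv hu
  exact Set.disjoint_left.mp hd2 haFa
    (mem_of_sInf_image_lt_of_reflTransGen hii hiii hBd hau (hmin a haFa))

/-- justification of terminating condition (C5): Let `k : V → ℕ` be
injective and let `F_a, F_d, B_d ⊆ V` be pairwise disjoint sets satisfying: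
(i) for every edge `(x, y)` with `x ∈ F_d`, `y ∈ F_a ∪ F_d`;
(ii) every node of `B_d` has a directed path to `u`;
(iii) for all nodes `x, y` each having a directed path to `u`, if `x ∈ B_d` and
`k(x) < k(y)` then `y ∈ B_d`;
(iv) `v ∈ F_a ∪ F_d` and `u ∉ F_a ∪ F_d`;
(v) `B_d ≠ ∅` and every `x ∈ F_a` satisfies `k(x) > min {k(y) : y ∈ B_d}`.
Then there is no directed path from `v` to `u`. -/
theorem no_path_of_min_backward_dead_lt_forward_alive
    {V : Type*} [Fintype V] (E : V → V → Prop) (k : V → ℕ)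
    (hk : Function.Injective k) (u v : V) (Fa Fd Bd : Set V)
    (hd1 : Disjoint Fa Fd) (hd2 : Disjoint Fa Bd) (hd3 : Disjoint Fd Bd)
    (hi : ∀ x y, E x y → x ∈ Fd → y ∈ Fa ∪ Fd)
    (hii : ∀ y ∈ Bd, Relation.ReflTransGen E y u)
    (hiii : ∀ x y, Relation.ReflTransGen E x u → Relation.ReflTransGen E y u →
      x ∈ Bd → k x < k y → y ∈ Bd)
    (hv : v ∈ Fa ∪ Fd) (hu : u ∉ Fa ∪ Fd)
    (hBd : Bd.Nonempty)
    (hmin : ∀ x ∈ Fa, sInf (k '' Bd) < k x) :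
    ¬ Relation.ReflTransGen E v u :=
  no_path_of_min_backward_dead_lt_forward_alive_general E k u v Fa Fd Bd hd2 hi hii hiii hv hu hBd
    hmin
end

section
/- Let G = (V, E) be a directed graph on a finite vertex set, k : V → ℕ an injective function, and u, v ∈ V. Let B_a, B_d, F_d ⊆ V be pairwise disjoint sets satisfying: (i) for every edge (x, y) ∈ E with y ∈ B_d, x ∈ B_a ∪ B_d; (ii) every node of F_d is reachable from v by a directed path; (iii) for all nodes x, y each reachable from v, if y ∈ F_d and k(x) < k(y) then x ∈ F_d; (iv) u ∈ B_a ∪ B_d and v ∉ B_a ∪ B_d; (v) F_d ≠ ∅ and every y ∈ B_a satisfies k(y) < max{k(x) : x ∈ F_d}. Then there is no directed path from v to u in G. -/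
/-!
Every node reachable from `v` avoids `B_a`: such a node `y` has `k y` below the maximum of `k`
on `F_d`, so by (ii) and (iii) it lies in `F_d`, which is disjoint from `B_a`. Hence, among
reachable nodes, `B_a ∪ B_d` is closed under predecessors by (i), and since it does not contain
`v`, no node of it is reachable from `v`.
-/

namespace Relation.ReflTransGen

variable {α : Type*} {r : α → α → Prop} {a b : α} {S : Set α}

theorem notMem_of_closed_under_reachable_predecessors (ha : a ∉ S)
    (hS : ∀ x y, ReflTransGen r a x → r x y → y ∈ S → x ∈ S) (h : ReflTransGen r a b) :
    b ∉ S := by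
  induction h with
  | refl => exact ha
  | tail hax hxy ih => exact fun hy ↦ ih (hS _ _ hax hxy hy)

end Relation.ReflTransGen

open Relation

theorem mem_of_reachable_of_lt_sSup {V : Type*} {E : V → V → Prop} {k : V → ℕ} {v y : V}
    {Fd : Set V} (hii : ∀ x ∈ Fd, ReflTransGen E v x)
    (hiii : ∀ x y, ReflTransGen E v x → ReflTransGen E v y → y ∈ Fd → k x < k y → x ∈ Fd)
    (hy : ReflTransGen E v y) (hlt : k y < sSup (k '' Fd)) : y ∈ Fd := by
  obtain ⟨_, ⟨w, hw, rfl⟩, hyw⟩ := exists_lt_of_lt_csSup' hlt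
  exact hiii y w hy (hii w hw) hw hyw

theorem no_path_of_max_forward_dead_gt_backward_alive_general
    {V : Type*} (E : V → V → Prop) (k : V → ℕ)
    (u v : V) (Ba Bd Fd : Set V)
    (hd2 : Disjoint Ba Fd)
    (hi : ∀ x y, E x y → y ∈ Bd → x ∈ Ba ∪ Bd)
    (hii : ∀ x ∈ Fd, Relation.ReflTransGen E v x)
    (hiii : ∀ x y, Relation.ReflTransGen E v x → Relation.ReflTransGen E v y →
      y ∈ Fd → k x < k y → x ∈ Fd)
    (hu : u ∈ Ba ∪ Bd) (hv : v ∉ Ba ∪ Bd)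
    (hmax : ∀ y ∈ Ba, k y < sSup (k '' Fd)) :
    ¬ Relation.ReflTransGen E v u := by
  have reachable_notMem_Ba : ∀ y, ReflTransGen E v y → y ∉ Ba := fun y hy hyBa ↦
    hd2.notMem_of_mem_left hyBa (mem_of_reachable_of_lt_sSup hii hiii hy (hmax y hyBa))
  refine fun hpath ↦ hpath.notMem_of_closed_under_reachable_predecessors hv ?_ hu
  rintro x y hx hxy (hyBa | hyBd)
  · exact absurd hyBa (reachable_notMem_Ba y (hx.tail hxy))
  · exact hi x y hxy hyBd

/-- justification of terminating condition (C6): Let `k : V → ℕ` be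
injective and let `B_a, B_d, F_d ⊆ V` be pairwise disjoint sets satisfying:
(i) for every edge `(x, y)` with `y ∈ B_d`, `x ∈ B_a ∪ B_d`;
(ii) every node of `F_d` is reachable from `v` by a directed path;
(iii) for all nodes `x, y` each reachable from `v`, if `y ∈ F_d` and `k(x) < k(y)` then
`x ∈ F_d`;
(iv) `u ∈ B_a ∪ B_d` and `v ∉ B_a ∪ B_d`;
(v) `F_d ≠ ∅` and every `y ∈ B_a` satisfies `k(y) < max {k(x) : x ∈ F_d}`.
Then there is no directed path from `v` to `u`. -/
theorem no_path_of_max_forward_dead_gt_backward_alive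
    {V : Type*} [Fintype V] (E : V → V → Prop) (k : V → ℕ)
    (hk : Function.Injective k) (u v : V) (Ba Bd Fd : Set V)
    (hd1 : Disjoint Ba Bd) (hd2 : Disjoint Ba Fd) (hd3 : Disjoint Bd Fd)
    (hi : ∀ x y, E x y → y ∈ Bd → x ∈ Ba ∪ Bd)
    (hii : ∀ x ∈ Fd, Relation.ReflTransGen E v x)
    (hiii : ∀ x y, Relation.ReflTransGen E v x → Relation.ReflTransGen E v y →
      y ∈ Fd → k x < k y → x ∈ Fd)
    (hu : u ∈ Ba ∪ Bd) (hv : v ∉ Ba ∪ Bd)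
    (hFd : Fd.Nonempty)
    (hmax : ∀ y ∈ Ba, k y < sSup (k '' Fd)) :
    ¬ Relation.ReflTransGen E v u :=
  no_path_of_max_forward_dead_gt_backward_alive_general E k u v Ba Bd Fd hd2 hi hii hiii hu hv hmax
end

section
/- Let G = (V, E) be an acyclic directed graph on a finite vertex set and let S ⊆ V. Then there exists an injective function k : V → ℕ such that (a) k(x) < k(y) for every edge (x, y) ∈ E, and (b) for all x, y ∈ V, if part(x) ≺* part(y) then k(x) < k(y). In other words, G admits a topological ordering consistent with the total order ≺* on the parts {V_{i,j}} induced by S. -/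
/-!
Rank the vertices by the key `(part x, |A(x)|)`, ordered lexicographically with `part` ordered by
`≺*`. Along an edge `x → y` we have `A(x) ⊆ A(y)` and `D(y) ⊆ D(x)`, so `part x ≼* part y`, and
acyclicity makes `A(x) ⊂ A(y)` strict; hence the key increases strictly along edges. Any injective
ranking of a finite set that refines a key into a linear order is then the required ordering.
-/

open Function Relation

section Ranking

variable {V α : Type*} [Finite V]

lemma ncard_setOf_lt_lt_of_lt [Preorder α] (g : V → α) {x y : V} (h : g x < g y) :
    {z | g z < g x}.ncard < {z | g z < g y}.ncard :=
  Set.ncard_lt_ncard ⟨fun _ hz => lt_trans hz h, fun hsub => lt_irrefl _ (hsub h)⟩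

lemma exists_injective_nat_forall_lt_of_lt [LinearOrder α] (f : V → α) :
    ∃ k : V → ℕ, Injective k ∧ ∀ x y, f x < f y → k x < k y := by
  obtain ⟨e, he⟩ := Countable.exists_injective_nat V
  -- `e` breaks the ties of `f`, so that `g` is injective.
  let g : V → α ×ₗ ℕ := fun x => toLex (f x, e x)
  have hg : Injective g := fun x y hxy => he (congrArg Prod.snd (toLex.injective hxy))
  refine ⟨fun x => {z | g z < g x}.ncard, fun x y hxy => ?_, fun x y h => ?_⟩
  · by_contra hne
    rcases lt_or_gt_of_ne (hg.ne hne) with hlt | hlt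
    · exact (ncard_setOf_lt_lt_of_lt g hlt).ne hxy
    · exact (ncard_setOf_lt_lt_of_lt g hlt).ne' hxy
  · exact ncard_setOf_lt_lt_of_lt g (Prod.Lex.toLex_lt_toLex.2 (Or.inl h))

end Ranking

section Parts

variable {V : Type*}

def ancestors (r : V → V → Prop) (y : V) : Set V := {a | ReflTransGen r a y}

def descendants (r : V → V → Prop) (x : V) : Set V := {b | ReflTransGen r x b}

variable {r : V → V → Prop} {x y : V}

lemma ancestors_subset_ancestors (h : ReflTransGen r x y) : ancestors r x ⊆ ancestors r y :=
  fun _ ha => ha.trans h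

lemma descendants_subset_descendants (h : ReflTransGen r x y) : descendants r y ⊆ descendants r x :=
  fun _ hb => h.trans hb

lemma ancestors_ssubset_ancestors (hacyc : ¬ ∃ w z, r w z ∧ ReflTransGen r z w) (h : r x y) :
    ancestors r x ⊂ ancestors r y :=
  ssubset_iff_subset_not_subset.2
    ⟨ancestors_subset_ancestors (.single h), fun hsub => hacyc ⟨x, y, h, hsub .refl⟩⟩

/-- `part(x) = (|A_S(x)|, |D_S(x)|)`; the order dual on the second coordinate makes `<` on
`ℕ ×ₗ ℕᵒᵈ` the order `≺*`. -/
noncomputable def part (r : V → V → Prop) (S : Set V) (x : V) : ℕ ×ₗ ℕᵒᵈ :=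
  toLex ((ancestors r x ∩ S).ncard, OrderDual.toDual (descendants r x ∩ S).ncard)

variable (S : Set V)

lemma part_lt_part_iff :
    part r S x < part r S y ↔
      (ancestors r x ∩ S).ncard < (ancestors r y ∩ S).ncard ∨
        (ancestors r x ∩ S).ncard = (ancestors r y ∩ S).ncard ∧
          (descendants r y ∩ S).ncard < (descendants r x ∩ S).ncard :=
  Prod.Lex.toLex_lt_toLex

lemma part_le_part [Finite V] (h : ReflTransGen r x y) : part r S x ≤ part r S y :=
  Prod.Lex.toLex_mono
    ⟨Set.ncard_le_ncard (Set.inter_subset_inter_left S (ancestors_subset_ancestors h)),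
      Set.ncard_le_ncard (Set.inter_subset_inter_left S (descendants_subset_descendants h))⟩

end Parts

/-- An acyclic directed graph `G = (V, E)` on a finite vertex set admits a
topological ordering `k : V → ℕ` (injective, increasing along edges) that is consistent
with the total order `≺*` on the parts `{V_{i,j}}` induced by `S`: if
`part(x) ≺* part(y)` then `k(x) < k(y)`, where `part(x) = (|A_S(x)|, |D_S(x)|)` and
`(i, j) ≺* (i', j')` iff `i < i'`, or `i = i'` and `j > j'`. -/
theorem exists_topological_order_consistent_with_parts
    {V : Type*} [Fintype V] (E : V → V → Prop) (S : Set V)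
    (hacyc : ¬ ∃ w z : V, E w z ∧ Relation.ReflTransGen E z w) :
    ∃ k : V → ℕ, Function.Injective k ∧
      (∀ x y, E x y → k x < k y) ∧
      (∀ x y : V,
        (({a | Relation.ReflTransGen E a x} ∩ S).ncard <
            ({a | Relation.ReflTransGen E a y} ∩ S).ncard ∨
          (({a | Relation.ReflTransGen E a x} ∩ S).ncard =
              ({a | Relation.ReflTransGen E a y} ∩ S).ncard ∧
            ({b | Relation.ReflTransGen E y b} ∩ S).ncard <
              ({b | Relation.ReflTransGen E x b} ∩ S).ncard)) →
        k x < k y) := by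
  obtain ⟨k, hk, hlt⟩ :=
    exists_injective_nat_forall_lt_of_lt fun x => toLex (part E S x, (ancestors E x).ncard)
  refine ⟨k, hk, fun x y hxy => hlt x y ?_, fun x y hxy => hlt x y ?_⟩
  · refine Prod.Lex.toLex_lt_toLex.2 ?_
    rcases (part_le_part S (.single hxy)).lt_or_eq with hpart | hpart
    · exact Or.inl hpart
    · exact Or.inr ⟨hpart, Set.ncard_lt_ncard (ancestors_ssubset_ancestors hacyc hxy)⟩
  · exact Prod.Lex.toLex_lt_toLex.2 (Or.inl ((part_lt_part_iff S).2 hxy))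
end

section
/- Let G = (V, E) be a directed graph on a finite vertex set, S ⊆ V, and let k : V → ℕ be an injective function consistent with the total order ≺* on parts, i.e., for all x, y ∈ V, part(x) ≺* part(y) implies k(x) < k(y). If (u, v) ∈ E is an edge with k(v) < k(u), then part(u) = part(v), i.e., u and v belong to the same part V_{i,j}. -/
/-! An edge `u → v` makes every ancestor of `u` an ancestor of `v` and every descendant of `v`
a descendant of `u`, so `part(u)` and `part(v)` compare componentwise the way that gives
`part(v) ⪯* part(u)`. Unless the parts are equal this is strict, and consistency of `k` then
forces `k u < k v`, contradicting the backward edge. -/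

open Relation

theorem Relation.ReflTransGen.setOf_rel_left_subset {α : Type*} {r : α → α → Prop} {u v : α}
    (h : r u v) : {a | ReflTransGen r a u} ⊆ {a | ReflTransGen r a v} :=
  fun _ ha => ha.tail h

theorem Relation.ReflTransGen.setOf_rel_right_subset {α : Type*} {r : α → α → Prop} {u v : α}
    (h : r u v) : {b | ReflTransGen r v b} ⊆ {b | ReflTransGen r u b} :=
  fun _ hb => hb.head h

theorem Prod.mk_eq_mk_of_le_of_ge_of_not_lex_lt {α β : Type*} [PartialOrder α] [PartialOrder β]
    {a a' : α} {b b' : β} (ha : a ≤ a') (hb : b' ≤ b) (h : ¬(a < a' ∨ a = a' ∧ b' < b)) :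
    (a, b) = (a', b') := by
  have ha' : a = a' := ha.eq_of_not_lt fun hlt => h (Or.inl hlt)
  have hb' : b' = b := hb.eq_of_not_lt fun hlt => h (Or.inr ⟨ha', hlt⟩)
  rw [ha', hb']

theorem backward_edge_same_part_general
    {V : Type*} [Fintype V] (E : V → V → Prop) (S : Set V) (k : V → ℕ)
    (hcons : ∀ x y : V,
      (({a | Relation.ReflTransGen E a x} ∩ S).ncard <
          ({a | Relation.ReflTransGen E a y} ∩ S).ncard ∨
        (({a | Relation.ReflTransGen E a x} ∩ S).ncard =
            ({a | Relation.ReflTransGen E a y} ∩ S).ncard ∧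
          ({b | Relation.ReflTransGen E y b} ∩ S).ncard <
            ({b | Relation.ReflTransGen E x b} ∩ S).ncard)) →
      k x < k y)
    (u v : V) (hedge : E u v) (hlt : k v < k u) :
    (({a | Relation.ReflTransGen E a u} ∩ S).ncard,
      ({b | Relation.ReflTransGen E u b} ∩ S).ncard) =
    (({a | Relation.ReflTransGen E a v} ∩ S).ncard,
      ({b | Relation.ReflTransGen E v b} ∩ S).ncard) := by
  have hanc := Set.ncard_le_ncard
    (Set.inter_subset_inter_left S (ReflTransGen.setOf_rel_left_subset hedge)) (Set.toFinite _)
  have hdesc := Set.ncard_le_ncard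
    (Set.inter_subset_inter_left S (ReflTransGen.setOf_rel_right_subset hedge)) (Set.toFinite _)
  exact Prod.mk_eq_mk_of_le_of_ge_of_not_lex_lt hanc hdesc fun h => hlt.not_gt (hcons u v h)

/-- Let `k : V → ℕ` be injective and consistent with the total order `≺*` on
parts: `part(x) ≺* part(y)` implies `k(x) < k(y)`. If `(u, v)` is an edge with
`k(v) < k(u)`, then `part(u) = part(v)`, i.e. `u` and `v` belong to the same part
`V_{i,j}`. -/
theorem backward_edge_same_part
    {V : Type*} [Fintype V] (E : V → V → Prop) (S : Set V) (k : V → ℕ)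
    (hk : Function.Injective k)
    (hcons : ∀ x y : V,
      (({a | Relation.ReflTransGen E a x} ∩ S).ncard <
          ({a | Relation.ReflTransGen E a y} ∩ S).ncard ∨
        (({a | Relation.ReflTransGen E a x} ∩ S).ncard =
            ({a | Relation.ReflTransGen E a y} ∩ S).ncard ∧
          ({b | Relation.ReflTransGen E y b} ∩ S).ncard <
            ({b | Relation.ReflTransGen E x b} ∩ S).ncard)) →
      k x < k y)
    (u v : V) (hedge : E u v) (hlt : k v < k u) :
    (({a | Relation.ReflTransGen E a u} ∩ S).ncard,
      ({b | Relation.ReflTransGen E u b} ∩ S).ncard) =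
    (({a | Relation.ReflTransGen E a v} ∩ S).ncard,
      ({b | Relation.ReflTransGen E v b} ∩ S).ncard) :=
  backward_edge_same_part_general E S k hcons u v hedge hlt
end
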